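/- arXiv:2601.10040 — 4 statements merged into one kernel-verified Lean document; each statement's English description precedes it below -/
import Mathlib

section
/- Let a, c, p, θ ∈ ℂ with c not a nonpositive integer. For n ∈ ℕ define u_n = ∑_{k=0}^{n} ((a)_k / ((c)_k · k!)) · θ^{n−k} · (−p)_{n−k} / (n−k)! (these are the Maclaurin coefficients of (1−θz)^p · M(a;c;z)). Then u_0 = 1, u_1 = a/c − θp, u_2 = (1/2)·((a²+a)/(c²+c) − 2aθp/c + θ²p(p−1)), and for every integer n ≥ 2, u_{n+1} = β₀(n)·u_n + β₁(n)·u_{n−1} + β₂(n)·u_{n−2}, where β₀(n) = (a + 2θn(c+n−1) − θp(c+2n) + n)/((n+1)(c+n)), β₁(n) = θ·(−2a − θ(n−p−1)(c+n−p−2) − 2n + p + 2)/((n+1)(c+n)), and β₂(n) = θ²(a+n−p−2)/((n+1)(c+n)). -/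
open Finset

noncomputable def poch (w : ℂ) (k : ℕ) : ℂ := (ascPochhammer ℂ k).eval w

lemma poch_zero (w : ℂ) : poch w 0 = 1 := by simp [poch]

lemma poch_succ (w : ℂ) (k : ℕ) : poch w (k + 1) = poch w k * (w + k) := by
  simp [poch, ascPochhammer_succ_eval]

lemma poch_ne_zero (c : ℂ) (hc : ∀ k : ℕ, c + (k : ℂ) ≠ 0) : ∀ k, poch c k ≠ 0 := by
  intro k
  induction k with
  | zero => simp [poch_zero]
  | succ n ih => rw [poch_succ]; exact mul_ne_zero ih (hc n)

theorem stmt_0 (a c p θ : ℂ) (hc : ∀ k : ℕ, c + (k : ℂ) ≠ 0)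
    (u : ℕ → ℂ)
    (hu : ∀ n : ℕ, u n = ∑ k ∈ range (n + 1),
      poch a k / (poch c k * (Nat.factorial k : ℂ)) *
        (θ ^ (n - k) * poch (-p) (n - k) / (Nat.factorial (n - k) : ℂ))) :
    u 0 = 1 ∧
    u 1 = a / c - θ * p ∧
    u 2 = (1 / 2) * ((a ^ 2 + a) / (c ^ 2 + c) - 2 * a * θ * p / c + θ ^ 2 * p * (p - 1)) ∧
    ∀ n : ℕ, 2 ≤ n →
      u (n + 1) =
        (a + 2 * θ * n * (c + n - 1) - θ * p * (c + 2 * n) + n) / (((n : ℂ) + 1) * (c + n)) * u n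
        + θ * (-2 * a - θ * (n - p - 1) * (c + n - p - 2) - 2 * n + p + 2) /
            (((n : ℂ) + 1) * (c + n)) * u (n - 1)
        + θ ^ 2 * (a + n - p - 2) / (((n : ℂ) + 1) * (c + n)) * u (n - 2) := by
  have hc0 : c ≠ 0 := by have := hc 0; simpa using this
  have hc1 : c + 1 ≠ 0 := by have := hc 1; simpa using this
  have hpn := poch_ne_zero c hc
  set M : ℕ → ℂ := fun k => poch a k / (poch c k * (Nat.factorial k : ℂ)) with hM
  set Bb : ℕ → ℂ := fun j => θ ^ j * poch (-p) j / (Nat.factorial j : ℂ) with hBb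
  have hfac : ∀ k : ℕ, ((Nat.factorial k : ℂ)) ≠ 0 := fun k =>
    Nat.cast_ne_zero.mpr (Nat.factorial_ne_zero k)
  -- pointwise recurrences
  have hMr : ∀ k : ℕ, ((k : ℂ) + 1) * (c + k) * M (k + 1) = (a + k) * M k := by
    intro k
    simp only [hM]
    rw [poch_succ a k, poch_succ c k]
    have hk1 : ((k : ℂ) + 1) ≠ 0 := Nat.cast_add_one_ne_zero k
    have hfs : ((Nat.factorial (k+1) : ℂ)) = ((k : ℂ) + 1) * (Nat.factorial k : ℂ) := by
      push_cast [Nat.factorial_succ]; ring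
    rw [hfs]
    have h1 := hpn k
    have h2 := hc k
    have h3 := hfac k
    field_simp
    try ring
  have hBr : ∀ j : ℕ, ((j : ℂ) + 1) * Bb (j + 1) = θ * ((j : ℂ) - p) * Bb j := by
    intro j
    simp only [hBb]
    rw [poch_succ (-p) j]
    have hfs : ((Nat.factorial (j+1) : ℂ)) = ((j : ℂ) + 1) * (Nat.factorial j : ℂ) := by
      push_cast [Nat.factorial_succ]; ring
    rw [hfs, pow_succ]
    have hj1 : ((j : ℂ) + 1) ≠ 0 := Nat.cast_add_one_ne_zero j
    have h3 := hfac j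
    field_simp
    try ring
  set U : ℕ → ℂ := fun t => ∑ k ∈ range (t + 1), M k * Bb (t - k) with hU
  set K : ℕ → ℂ := fun t => ∑ k ∈ range (t + 1), (k : ℂ) * (M k * Bb (t - k)) with hK
  set Q : ℕ → ℂ := fun t => ∑ k ∈ range (t + 1), (k : ℂ) ^ 2 * (M k * Bb (t - k)) with hQ
  have huU : ∀ n, u n = U n := by
    intro n; rw [hu n]
  -- relation A : from M recurrence
  have relA : ∀ t : ℕ, Q (t + 1) + (c - 1) * K (t + 1) = a * U t + K t := by
    intro t
    have step1 : Q (t + 1) + (c - 1) * K (t + 1)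
        = ∑ k ∈ range (t + 2), ((k : ℂ) ^ 2 + (c - 1) * k) * (M k * Bb (t + 1 - k)) := by
      simp only [hQ, hK, mul_sum, ← sum_add_distrib]
      exact sum_congr rfl fun k _ => by ring
    rw [step1, Finset.sum_range_succ']
    have h0 : (((0:ℕ) : ℂ) ^ 2 + (c - 1) * ((0:ℕ):ℂ)) * (M 0 * Bb (t + 1 - 0)) = 0 := by
      simp
    rw [h0, add_zero]
    have step2 : ∀ i ∈ range (t + 1),
        (((i+1 : ℕ) : ℂ) ^ 2 + (c - 1) * ((i+1:ℕ) : ℂ)) * (M (i+1) * Bb (t + 1 - (i + 1)))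
        = (a + i) * (M i * Bb (t - i)) := by
      intro i _
      have hstep := hMr i
      have hnat : t + 1 - (i + 1) = t - i := by omega
      rw [hnat]
      push_cast
      linear_combination Bb (t - i) * hstep
    rw [sum_congr rfl step2]
    simp only [hU, hK, mul_sum, ← sum_add_distrib]
    exact sum_congr rfl fun k _ => by ring
  -- relation B : from Bb recurrence
  have relB : ∀ t : ℕ, ((t : ℂ) + 1) * U (t + 1) - K (t + 1)
      = θ * ((t : ℂ) - p) * U t - θ * K t := by
    intro t
    have step1 : ((t : ℂ) + 1) * U (t + 1) - K (t + 1)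
        = ∑ k ∈ range (t + 2), (((t : ℂ) + 1) - k) * (M k * Bb (t + 1 - k)) := by
      simp only [hU, hK, mul_sum, ← sum_sub_distrib]
      exact sum_congr rfl fun k _ => by ring
    rw [step1, Finset.sum_range_succ]
    have h0 : (((t : ℂ) + 1) - ((t+1 : ℕ) : ℂ)) * (M (t+1) * Bb (t + 1 - (t+1))) = 0 := by
      push_cast; ring_nf
    rw [h0, add_zero]
    have step2 : ∀ k ∈ range (t + 1),
        (((t : ℂ) + 1) - k) * (M k * Bb (t + 1 - k))
        = (θ * ((t : ℂ) - p) - θ * k) * (M k * Bb (t - k)) := by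
      intro k hk
      have hkle : k ≤ t := by simpa [Nat.lt_succ_iff] using hk
      have hj : t + 1 - k = (t - k) + 1 := by omega
      have hcast : ((t - k : ℕ) : ℂ) = (t : ℂ) - k := by
        push_cast [Nat.cast_sub hkle]; ring
      have hstep := hBr (t - k)
      rw [hcast] at hstep
      rw [hj]
      linear_combination M k * hstep
    rw [sum_congr rfl step2]
    simp only [hU, hK, mul_sum, ← sum_sub_distrib]
    exact sum_congr rfl fun k _ => by ring
  -- relation C : from Bb recurrence with weight k
  have relC : ∀ t : ℕ, ((t : ℂ) + 1) * K (t + 1) - Q (t + 1)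
      = θ * ((t : ℂ) - p) * K t - θ * Q t := by
    intro t
    have step1 : ((t : ℂ) + 1) * K (t + 1) - Q (t + 1)
        = ∑ k ∈ range (t + 2), (k : ℂ) * ((((t : ℂ) + 1) - k) * (M k * Bb (t + 1 - k))) := by
      simp only [hK, hQ, mul_sum, ← sum_sub_distrib]
      exact sum_congr rfl fun k _ => by ring
    rw [step1, Finset.sum_range_succ]
    have h0 : ((t+1:ℕ) : ℂ) * ((((t : ℂ) + 1) - ((t+1 : ℕ) : ℂ)) * (M (t+1) * Bb (t + 1 - (t+1)))) = 0 := by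
      push_cast; ring_nf
    rw [h0, add_zero]
    have step2 : ∀ k ∈ range (t + 1),
        (k : ℂ) * ((((t : ℂ) + 1) - k) * (M k * Bb (t + 1 - k)))
        = (k : ℂ) * ((θ * ((t : ℂ) - p) - θ * k) * (M k * Bb (t - k))) := by
      intro k hk
      have hkle : k ≤ t := by simpa [Nat.lt_succ_iff] using hk
      have hj : t + 1 - k = (t - k) + 1 := by omega
      have hcast : ((t - k : ℕ) : ℂ) = (t : ℂ) - k := by
        push_cast [Nat.cast_sub hkle]; ring
      have hstep := hBr (t - k)
      rw [hcast] at hstep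
      rw [hj]
      linear_combination (k : ℂ) * M k * hstep
    rw [sum_congr rfl step2]
    simp only [hK, hQ, mul_sum, ← sum_sub_distrib]
    exact sum_congr rfl fun k _ => by ring
  refine ⟨?_, ?_, ?_, ?_⟩
  · rw [hu 0]
    simp [poch_zero]
  · rw [hu 1]
    rw [Finset.sum_range_succ, Finset.sum_range_one]
    norm_num [poch_zero, poch_succ, Nat.factorial]
    field_simp
    ring
  · rw [hu 2]
    rw [Finset.sum_range_succ, Finset.sum_range_succ, Finset.sum_range_one]
    norm_num [poch_zero, poch_succ, Nat.factorial]
    have hcc : c ^ 2 + c ≠ 0 := by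
      have h := mul_ne_zero hc0 hc1
      rw [mul_add, mul_one, ← sq] at h
      exact h
    have hcc' : c + c ^ 2 ≠ 0 := by rwa [add_comm] at hcc
    field_simp
    ring
  · intro n hn
    obtain ⟨m, rfl⟩ : ∃ m, n = m + 2 := ⟨n - 2, by omega⟩
    have hden1 : ((((m + 2 : ℕ) : ℂ)) + 1) ≠ 0 := Nat.cast_add_one_ne_zero (m + 2)
    have hden2 : (c + ((m + 2 : ℕ) : ℂ)) ≠ 0 := hc (m + 2)
    simp only [huU]
    have e1 := relA (m + 1)
    have e2 := relA m
    have e3 := relC (m + 1)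
    have e4 := relC m
    have e5 := relB (m + 1)
    have e6 := relB m
    have e1' := relA (m + 2)
    have e3' := relC (m + 2)
    have e5' := relB (m + 2)
    have key : (((m + 2 : ℕ) : ℂ) + 1) * (c + ((m + 2 : ℕ) : ℂ)) * U (m + 2 + 1)
        = (a + 2 * θ * ((m+2:ℕ):ℂ) * (c + ((m+2:ℕ):ℂ) - 1) - θ * p * (c + 2 * ((m+2:ℕ):ℂ)) + ((m+2:ℕ):ℂ)) * U (m + 2)
        + θ * (-2 * a - θ * (((m+2:ℕ):ℂ) - p - 1) * (c + ((m+2:ℕ):ℂ) - p - 2) - 2 * ((m+2:ℕ):ℂ) + p + 2) * U (m + 1)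
        + θ ^ 2 * (a + ((m+2:ℕ):ℂ) - p - 2) * U m := by
      push_cast at e1 e2 e3 e4 e5 e6 e1' e3' e5' ⊢
      linear_combination e1' + e3' - 2 * θ * e1 - θ * e3 + θ^2 * e2
        + (c + (m:ℂ) + 2) * e5' + (θ * (p - (m:ℂ) - c) - 1) * e5 + θ * e6
    have h1 : (m + 2 - 1) = m + 1 := by omega
    have h2 : (m + 2 - 2) = m := by omega
    rw [h1, h2]
    rw [div_mul_eq_mul_div, div_mul_eq_mul_div, div_mul_eq_mul_div,
      ← add_div, ← add_div, eq_div_iff (mul_ne_zero hden1 hden2)]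
    push_cast at key ⊢
    linear_combination key
end

section
/- Let a, b, c, p, θ ∈ ℂ with c not a nonpositive integer. For n ∈ ℕ define v_n = ∑_{k=0}^{n} ((a)_k (b)_k / (k! · (c)_k)) · θ^{n−k} · (−p)_{n−k} / (n−k)! (the Maclaurin coefficients of (1−θz)^p · F(a,b;c;z)). Then v_0 = 1, v_1 = ab/c − pθ, v_2 = (1/2)θ²p(p−1) − θp·ab/c + (1/2)·ab(a+1)(b+1)/(c(c+1)), and for every integer n ≥ 2, v_{n+1} = μ(n)·v_n/((n+1)(n+c)) − θ·ζ(n)·v_{n−1}/((n+1)(n+c)) + θ²·σ(n)·v_{n−2}/((n+1)(n+c)), where μ(n) = (n+a)(n+b) + θ(2n² − 2n(p−c+1) − cp), ζ(n) = 2n² + 2(a+b−p−2)n − (a+b−1)p + 2(a−1)(b−1) + θ(n−p−1)(n−p+c−2), and σ(n) = (n+a−p−2)(n+b−p−2). -/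
open Finset


namespace Stmt3Helper

open PowerSeries

lemma poch_zero (w : ℂ) : poch w 0 = 1 := by simp [poch]

lemma poch_succ (w : ℂ) (k : ℕ) : poch w (k + 1) = poch w k * (w + k) := by
  simp [poch, ascPochhammer_succ_right]

noncomputable def fc (a b c : ℂ) (k : ℕ) : ℂ :=
  poch a k * poch b k / ((Nat.factorial k : ℂ) * poch c k)

noncomputable def gc (p θ : ℂ) (m : ℕ) : ℂ :=
  θ ^ m * poch (-p) m / (Nat.factorial m : ℂ)

lemma poch_one (w : ℂ) : poch w 1 = w := by
  rw [show (1:ℕ) = 0 + 1 from rfl, poch_succ, poch_zero]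
  push_cast
  ring

lemma poch_two (w : ℂ) : poch w 2 = w * (w + 1) := by
  rw [show (2:ℕ) = 1 + 1 from rfl, poch_succ, poch_one]
  push_cast
  ring

lemma pochc_ne {c : ℂ} (hc : ∀ k : ℕ, c + (k : ℂ) ≠ 0) (k : ℕ) : poch c k ≠ 0 := by
  induction k with
  | zero => simp [poch_zero]
  | succ k ih =>
      rw [poch_succ]
      exact mul_ne_zero ih (hc k)

lemma fc_rec (a b c : ℂ) (hc : ∀ k : ℕ, c + (k : ℂ) ≠ 0) (k : ℕ) :
    ((k : ℂ) + 1) * (c + k) * fc a b c (k + 1) = (a + k) * (b + k) * fc a b c k := by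
  have h1 : (Nat.factorial k : ℂ) ≠ 0 := Nat.cast_ne_zero.2 (Nat.factorial_ne_zero k)
  have h2 : poch c k ≠ 0 := pochc_ne hc k
  have h3 : c + (k : ℂ) ≠ 0 := hc k
  have h4 : ((k : ℂ) + 1) ≠ 0 := Nat.cast_add_one_ne_zero k
  rw [fc, fc, poch_succ, poch_succ, poch_succ, Nat.factorial_succ]
  push_cast
  field_simp

lemma gc_rec (p θ : ℂ) (m : ℕ) :
    ((m : ℂ) + 1) * gc p θ (m + 1) = θ * ((m : ℂ) - p) * gc p θ m := by
  have h1 : (Nat.factorial m : ℂ) ≠ 0 := Nat.cast_ne_zero.2 (Nat.factorial_ne_zero m)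
  have h4 : ((m : ℂ) + 1) ≠ 0 := Nat.cast_add_one_ne_zero m
  rw [gc, gc, poch_succ, Nat.factorial_succ, pow_succ]
  push_cast
  field_simp
  ring


lemma coeff_X_mul_ite (φ : ℂ⟦X⟧) (n : ℕ) :
    PowerSeries.coeff n (X * φ) = if 1 ≤ n then PowerSeries.coeff (n - 1) φ else 0 := by
  rw [← pow_one (X : ℂ⟦X⟧), coeff_X_pow_mul']

noncomputable def Fser (a b c : ℂ) : ℂ⟦X⟧ := PowerSeries.mk (fc a b c)
noncomputable def Gser (p θ : ℂ) : ℂ⟦X⟧ := PowerSeries.mk (gc p θ)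

lemma hFode (a b c : ℂ) (hc : ∀ k : ℕ, c + (k : ℂ) ≠ 0) :
    X * (d⁄dX ℂ (d⁄dX ℂ (Fser a b c))) + C c * (d⁄dX ℂ (Fser a b c))
      = X ^ 2 * (d⁄dX ℂ (d⁄dX ℂ (Fser a b c)))
        + C (a + b + 1) * (X * (d⁄dX ℂ (Fser a b c)))
        + C (a * b) * Fser a b c := by
  set s := a + b + 1 with hs
  ext j
  rcases j with _ | _ | j
  · simp only [map_add, coeff_C_mul, coeff_X_mul_ite, coeff_X_pow_mul',
      coeff_derivative, coeff_mk, Fser]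
    split_ifs <;> try omega
    have h0 := fc_rec a b c hc 0
    simp only [hs]
    push_cast at h0 ⊢
    linear_combination h0
  · simp only [map_add, coeff_C_mul, coeff_X_mul_ite, coeff_X_pow_mul',
      coeff_derivative, coeff_mk, Fser]
    split_ifs <;> try omega
    simp only [show (1:ℕ) - 1 = 0 from rfl]
    have h1 := fc_rec a b c hc 1
    simp only [hs]
    push_cast at h1 ⊢
    ring_nf at h1 ⊢
    linear_combination h1
  · simp only [map_add, coeff_C_mul, coeff_X_mul_ite, coeff_X_pow_mul',
      coeff_derivative, coeff_mk, Fser]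
    split_ifs <;> try omega
    simp only [show ∀ j : ℕ, j + 2 - 1 = j + 1 from fun _ => rfl,
      show ∀ j : ℕ, j + 2 - 2 = j from fun _ => rfl]
    have h2 := fc_rec a b c hc (j + 2)
    simp only [hs]
    push_cast at h2 ⊢
    ring_nf at h2 ⊢
    linear_combination h2

lemma hGode (p θ : ℂ) :
    d⁄dX ℂ (Gser p θ) + C (p * θ) * Gser p θ
      = C θ * (X * d⁄dX ℂ (Gser p θ)) := by
  ext j
  rcases j with _ | j
  · simp only [map_add, coeff_C_mul, coeff_X_mul_ite,
      coeff_derivative, coeff_mk, Gser]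
    split_ifs <;> try omega
    have h0 := gc_rec p θ 0
    push_cast at h0 ⊢
    norm_num
    linear_combination h0
  · simp only [map_add, coeff_C_mul, coeff_X_mul_ite,
      coeff_derivative, coeff_mk, Gser]
    split_ifs <;> try omega
    simp only [show ∀ j : ℕ, j + 1 - 1 = j from fun _ => rfl]
    have h1 := gc_rec p θ (j + 1)
    push_cast at h1 ⊢
    ring_nf at h1 ⊢
    linear_combination h1

lemma hGode2 (p θ : ℂ) :
    d⁄dX ℂ (d⁄dX ℂ (Gser p θ)) + C (θ ^ 2) * (X ^ 2 * d⁄dX ℂ (d⁄dX ℂ (Gser p θ)))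
      = C (2 * θ) * (X * d⁄dX ℂ (d⁄dX ℂ (Gser p θ)))
        + C (p * (p - 1) * θ ^ 2) * Gser p θ := by
  ext j
  rcases j with _ | _ | j
  · simp only [map_add, coeff_C_mul, coeff_X_mul_ite, coeff_X_pow_mul',
      coeff_derivative, coeff_mk, Gser]
    split_ifs <;> try omega
    have h0 := gc_rec p θ 0
    have h1 := gc_rec p θ 1
    push_cast at h0 h1 ⊢
    norm_num
    linear_combination h1 + θ * (1 - p) * h0
  · simp only [map_add, coeff_C_mul, coeff_X_mul_ite, coeff_X_pow_mul',
      coeff_derivative, coeff_mk, Gser]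
    split_ifs <;> try omega
    simp only [show (1:ℕ) - 1 = 0 from rfl]
    have h1 := gc_rec p θ 1
    have h2 := gc_rec p θ 2
    push_cast at h1 h2 ⊢
    ring_nf at h1 h2 ⊢
    linear_combination 2 * h2 - θ * p * h1
  · simp only [map_add, coeff_C_mul, coeff_X_mul_ite, coeff_X_pow_mul',
      coeff_derivative, coeff_mk, Gser]
    split_ifs <;> try omega
    simp only [show ∀ j : ℕ, j + 2 - 1 = j + 1 from fun _ => rfl,
      show ∀ j : ℕ, j + 2 - 2 = j from fun _ => rfl]
    have h2 := gc_rec p θ (j + 2)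
    have h3 := gc_rec p θ (j + 3)
    push_cast at h2 h3 ⊢
    ring_nf at h2 h3 ⊢
    linear_combination ((j : ℂ) + 3) * h3 - θ * ((j : ℂ) + 1 + p) * h2

lemma hODE (a b c p θ : ℂ) (hc : ∀ k : ℕ, c + (k : ℂ) ≠ 0) :
    X * (d⁄dX ℂ (d⁄dX ℂ (Fser a b c * Gser p θ)))
      - C (1 + 2 * θ) * (X ^ 2 * (d⁄dX ℂ (d⁄dX ℂ (Fser a b c * Gser p θ))))
      + C (θ ^ 2 + 2 * θ) * (X ^ 3 * (d⁄dX ℂ (d⁄dX ℂ (Fser a b c * Gser p θ))))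
      - C (θ ^ 2) * (X ^ 4 * (d⁄dX ℂ (d⁄dX ℂ (Fser a b c * Gser p θ))))
      + C c * (d⁄dX ℂ (Fser a b c * Gser p θ))
      + C (2 * p * θ - 2 * c * θ - (a + b + 1)) * (X * (d⁄dX ℂ (Fser a b c * Gser p θ)))
      + C (-2 * p * θ ^ 2 - 2 * p * θ + c * θ ^ 2 + 2 * θ * (a + b + 1)) *
          (X ^ 2 * (d⁄dX ℂ (Fser a b c * Gser p θ)))
      + C (2 * p * θ ^ 2 - θ ^ 2 * (a + b + 1)) * (X ^ 3 * (d⁄dX ℂ (Fser a b c * Gser p θ)))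
      + C (p * θ * c - a * b) * (Fser a b c * Gser p θ)
      + C (p * (p + 1) * θ ^ 2 - p * θ * (a + b + 1) - c * p * θ ^ 2 + 2 * a * b * θ) *
          (X * (Fser a b c * Gser p θ))
      + C (-(p * (p + 1) * θ ^ 2) + p * θ ^ 2 * (a + b + 1) - a * b * θ ^ 2) *
          (X ^ 2 * (Fser a b c * Gser p θ)) = 0 := by
  have hF := hFode a b c hc
  have hG := hGode p θ
  have hG2 := hGode2 p θ
  set F := Fser a b c with hFdef
  set G := Gser p θ with hGdef
  have e1 : d⁄dX ℂ (F * G) = (d⁄dX ℂ F) * G + F * (d⁄dX ℂ G) := by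
    rw [Derivation.leibniz]
    simp only [smul_eq_mul]
    ring
  have e2 : d⁄dX ℂ (d⁄dX ℂ (F * G)) =
      (d⁄dX ℂ (d⁄dX ℂ F)) * G + 2 * ((d⁄dX ℂ F) * (d⁄dX ℂ G)) + F * (d⁄dX ℂ (d⁄dX ℂ G)) := by
    rw [e1, map_add, Derivation.leibniz, Derivation.leibniz]
    simp only [smul_eq_mul]
    ring
  rw [e2, e1]
  simp only [map_add, map_sub, map_mul, map_pow, map_one, map_ofNat, map_neg] at hF hG hG2 ⊢
  linear_combination
    ((1 - C θ * X) ^ 2 * G) * hF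
    + (2 * X * (1 - X) * (1 - C θ * X) * (d⁄dX ℂ F)
        + (2 * C p * C θ * X * (1 - X)
            + (C c - (C a + C b + 1) * X) * (1 - C θ * X)) * F) * hG
    + (X * (1 - X) * F) * hG2

set_option maxHeartbeats 2000000 in
lemma key (a b c p θ : ℂ) (hc : ∀ k : ℕ, c + (k : ℂ) ≠ 0)
    (v : ℕ → ℂ)
    (hveq : ∀ n : ℕ, v n = PowerSeries.coeff n (Fser a b c * Gser p θ))
    (n : ℕ) (hn : 2 ≤ n) :
    ((n : ℂ) + 1) * ((n : ℂ) + c) * v (n + 1) =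
      (((n : ℂ) + a) * ((n : ℂ) + b) + θ * (2 * (n : ℂ) ^ 2 - 2 * (n : ℂ) * (p - c + 1) - c * p)) * v n
      - θ * (2 * (n : ℂ) ^ 2 + 2 * (a + b - p - 2) * (n : ℂ) - (a + b - 1) * p
            + 2 * (a - 1) * (b - 1) + θ * ((n : ℂ) - p - 1) * ((n : ℂ) - p + c - 2)) * v (n - 1)
      + θ ^ 2 * (((n : ℂ) + a - p - 2) * ((n : ℂ) + b - p - 2)) * v (n - 2) := by
  have hsplit : ∀ m : ℕ, ∀ hODEm : PowerSeries.coeff m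
      (X * (d⁄dX ℂ (d⁄dX ℂ (Fser a b c * Gser p θ)))
      - C (1 + 2 * θ) * (X ^ 2 * (d⁄dX ℂ (d⁄dX ℂ (Fser a b c * Gser p θ))))
      + C (θ ^ 2 + 2 * θ) * (X ^ 3 * (d⁄dX ℂ (d⁄dX ℂ (Fser a b c * Gser p θ))))
      - C (θ ^ 2) * (X ^ 4 * (d⁄dX ℂ (d⁄dX ℂ (Fser a b c * Gser p θ))))
      + C c * (d⁄dX ℂ (Fser a b c * Gser p θ))
      + C (2 * p * θ - 2 * c * θ - (a + b + 1)) * (X * (d⁄dX ℂ (Fser a b c * Gser p θ)))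
      + C (-2 * p * θ ^ 2 - 2 * p * θ + c * θ ^ 2 + 2 * θ * (a + b + 1)) *
          (X ^ 2 * (d⁄dX ℂ (Fser a b c * Gser p θ)))
      + C (2 * p * θ ^ 2 - θ ^ 2 * (a + b + 1)) * (X ^ 3 * (d⁄dX ℂ (Fser a b c * Gser p θ)))
      + C (p * θ * c - a * b) * (Fser a b c * Gser p θ)
      + C (p * (p + 1) * θ ^ 2 - p * θ * (a + b + 1) - c * p * θ ^ 2 + 2 * a * b * θ) *
          (X * (Fser a b c * Gser p θ))
      + C (-(p * (p + 1) * θ ^ 2) + p * θ ^ 2 * (a + b + 1) - a * b * θ ^ 2) *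
          (X ^ 2 * (Fser a b c * Gser p θ))) = 0, True := fun _ _ => trivial
  clear hsplit
  rcases Nat.lt_or_ge n 4 with hm | hm
  · interval_cases n
    · have h := congrArg (PowerSeries.coeff 2) (hODE a b c p θ hc)
      rw [map_zero] at h
      set q2 := 1 + 2 * θ with hq2
      set q3 := θ ^ 2 + 2 * θ with hq3
      set q5 := 2 * p * θ - 2 * c * θ - (a + b + 1) with hq5
      set q6 := -2 * p * θ ^ 2 - 2 * p * θ + c * θ ^ 2 + 2 * θ * (a + b + 1) with hq6
      set q7 := 2 * p * θ ^ 2 - θ ^ 2 * (a + b + 1) with hq7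
      set r0 := p * θ * c - a * b with hr0
      set r1 := p * (p + 1) * θ ^ 2 - p * θ * (a + b + 1) - c * p * θ ^ 2 + 2 * a * b * θ with hr1
      set r2 := -(p * (p + 1) * θ ^ 2) + p * θ ^ 2 * (a + b + 1) - a * b * θ ^ 2 with hr2
      simp only [map_add, map_sub, coeff_C_mul, coeff_X_mul_ite, coeff_X_pow_mul',
        coeff_derivative] at h
      split_ifs at h <;> try omega
      simp only [show (2:ℕ) - 1 = 1 from rfl, show (2:ℕ) - 2 = 0 from rfl] at h
      simp only [← hveq] at h
      simp only [hq2, hq3, hq5, hq6, hq7, hr0, hr1, hr2] at h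
      push_cast at h ⊢
      ring_nf at h ⊢
      linear_combination h
    · have h := congrArg (PowerSeries.coeff 3) (hODE a b c p θ hc)
      rw [map_zero] at h
      set q2 := 1 + 2 * θ with hq2
      set q3 := θ ^ 2 + 2 * θ with hq3
      set q5 := 2 * p * θ - 2 * c * θ - (a + b + 1) with hq5
      set q6 := -2 * p * θ ^ 2 - 2 * p * θ + c * θ ^ 2 + 2 * θ * (a + b + 1) with hq6
      set q7 := 2 * p * θ ^ 2 - θ ^ 2 * (a + b + 1) with hq7
      set r0 := p * θ * c - a * b with hr0
      set r1 := p * (p + 1) * θ ^ 2 - p * θ * (a + b + 1) - c * p * θ ^ 2 + 2 * a * b * θ with hr1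
      set r2 := -(p * (p + 1) * θ ^ 2) + p * θ ^ 2 * (a + b + 1) - a * b * θ ^ 2 with hr2
      simp only [map_add, map_sub, coeff_C_mul, coeff_X_mul_ite, coeff_X_pow_mul',
        coeff_derivative] at h
      split_ifs at h <;> try omega
      simp only [show (3:ℕ) - 1 = 2 from rfl, show (3:ℕ) - 2 = 1 from rfl,
        show (3:ℕ) - 3 = 0 from rfl] at h
      simp only [← hveq] at h
      simp only [hq2, hq3, hq5, hq6, hq7, hr0, hr1, hr2] at h
      push_cast at h ⊢
      ring_nf at h ⊢
      linear_combination h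
  · obtain ⟨l, rfl⟩ : ∃ l, n = l + 4 := ⟨n - 4, by omega⟩
    have h := congrArg (PowerSeries.coeff (l + 4)) (hODE a b c p θ hc)
    rw [map_zero] at h
    set q2 := 1 + 2 * θ with hq2
    set q3 := θ ^ 2 + 2 * θ with hq3
    set q5 := 2 * p * θ - 2 * c * θ - (a + b + 1) with hq5
    set q6 := -2 * p * θ ^ 2 - 2 * p * θ + c * θ ^ 2 + 2 * θ * (a + b + 1) with hq6
    set q7 := 2 * p * θ ^ 2 - θ ^ 2 * (a + b + 1) with hq7
    set r0 := p * θ * c - a * b with hr0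
    set r1 := p * (p + 1) * θ ^ 2 - p * θ * (a + b + 1) - c * p * θ ^ 2 + 2 * a * b * θ with hr1
    set r2 := -(p * (p + 1) * θ ^ 2) + p * θ ^ 2 * (a + b + 1) - a * b * θ ^ 2 with hr2
    simp only [map_add, map_sub, coeff_C_mul, coeff_X_mul_ite, coeff_X_pow_mul',
      coeff_derivative] at h
    split_ifs at h <;> try omega
    simp only [show ∀ l : ℕ, l + 4 - 1 = l + 3 from fun _ => rfl,
      show ∀ l : ℕ, l + 4 - 2 = l + 2 from fun _ => rfl,
      show ∀ l : ℕ, l + 4 - 3 = l + 1 from fun _ => rfl,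
      show ∀ l : ℕ, l + 4 - 4 = l from fun _ => rfl] at h
    simp only [← hveq] at h
    simp only [show ∀ l : ℕ, l + 4 - 1 = l + 3 from fun _ => rfl,
      show ∀ l : ℕ, l + 4 - 2 = l + 2 from fun _ => rfl]
    simp only [hq2, hq3, hq5, hq6, hq7, hr0, hr1, hr2] at h
    push_cast at h ⊢
    ring_nf at h ⊢
    linear_combination h

end Stmt3Helper

theorem stmt_3 (a b c p θ : ℂ) (hc : ∀ k : ℕ, c + (k : ℂ) ≠ 0)
    (v : ℕ → ℂ)
    (hv : ∀ n : ℕ, v n = ∑ k ∈ range (n + 1),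
      poch a k * poch b k / ((Nat.factorial k : ℂ) * poch c k) *
        (θ ^ (n - k) * poch (-p) (n - k) / (Nat.factorial (n - k) : ℂ))) :
    v 0 = 1 ∧
    v 1 = a * b / c - p * θ ∧
    v 2 = (1 / 2) * θ ^ 2 * p * (p - 1) - θ * p * (a * b / c)
        + (1 / 2) * (a * b * (a + 1) * (b + 1) / (c * (c + 1))) ∧
    ∀ n : ℕ, 2 ≤ n →
      v (n + 1) =
        ((n + a) * (n + b) + θ * (2 * n ^ 2 - 2 * n * (p - c + 1) - c * p)) * v n /
            (((n : ℂ) + 1) * (n + c))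
        - θ * (2 * n ^ 2 + 2 * (a + b - p - 2) * n - (a + b - 1) * p
              + 2 * (a - 1) * (b - 1) + θ * (n - p - 1) * (n - p + c - 2)) * v (n - 1) /
            (((n : ℂ) + 1) * (n + c))
        + θ ^ 2 * ((n + a - p - 2) * (n + b - p - 2)) * v (n - 2) /
            (((n : ℂ) + 1) * (n + c)) := by
  have hveq : ∀ n : ℕ, v n =
      PowerSeries.coeff n (Stmt3Helper.Fser a b c * Stmt3Helper.Gser p θ) := by
    intro n
    rw [hv n, PowerSeries.coeff_mul, Finset.Nat.sum_antidiagonal_eq_sum_range_succ_mk]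
    simp [Stmt3Helper.Fser, Stmt3Helper.Gser, Stmt3Helper.fc, Stmt3Helper.gc]
  have hc0 : c ≠ 0 := by simpa using hc 0
  have hc1 : c + 1 ≠ 0 := by simpa using hc 1
  refine ⟨?_, ?_, ?_, ?_⟩
  · rw [hv 0]
    simp [poch]
  · rw [hv 1, Finset.sum_range_succ, Finset.sum_range_one]
    simp only [show (1:ℕ) - 1 = 0 from rfl, show (1:ℕ) - 0 = 1 from rfl,
      Stmt3Helper.poch_zero, Stmt3Helper.poch_one]
    norm_num [Nat.factorial]
    field_simp
    ring
  · rw [hv 2, Finset.sum_range_succ, Finset.sum_range_succ, Finset.sum_range_one]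
    simp only [show (2:ℕ) - 1 = 1 from rfl, show (2:ℕ) - 2 = 0 from rfl,
      show (2:ℕ) - 0 = 2 from rfl,
      Stmt3Helper.poch_zero, Stmt3Helper.poch_one, Stmt3Helper.poch_two]
    norm_num [Nat.factorial]
    field_simp
    ring
  · intro n hn
    have hkey := Stmt3Helper.key a b c p θ hc v hveq n hn
    have h1 : ((n : ℂ) + 1) ≠ 0 := Nat.cast_add_one_ne_zero n
    have h2 : ((n : ℂ) + c) ≠ 0 := by rw [add_comm]; exact hc n
    field_simp
    linear_combination hkey
end

section
/- Let a, b, c ∈ ℂ, none of a, b, c a nonpositive integer. For k ∈ ℕ set w_k = (a)_k(b)_k/(k!·(c)_k), and define λ_0 = 0 and λ_n = −∑_{k=0}^{n−1} w_k/(n−k) for n ≥ 1 (the Maclaurin coefficients of ln(1−z)·F(a,b;c;z)). Then λ_1 = −1 and for every integer n ≥ 1, λ_{n+1} = τ_n·λ_n − ρ_n·λ_{n−1} + γ_n·w_n, where τ_n = (2n² + (a+b+c−1)n + ab)/((n+1)(n+c)), ρ_n = (n+a−1)(n+b−1)/((n+1)(n+c)), and γ_n = ((c−b−a)n² + (a+b−2ab)n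 − c(a−1)(b−1))/((n+1)(n+a−1)(n+b−1)(n+c)). -/
open Finset

lemma poch_ne_zero_s6 (x : ℂ) (hx : ∀ k : ℕ, x + (k : ℂ) ≠ 0) (k : ℕ) : poch x k ≠ 0 := by
  induction k with
  | zero => simp [poch]
  | succ n ih =>
    unfold poch at *
    rw [ascPochhammer_succ_eval]
    exact mul_ne_zero ih (hx n)

set_option maxHeartbeats 1000000 in
theorem stmt_6 (a b c : ℂ)
    (ha : ∀ k : ℕ, a + (k : ℂ) ≠ 0) (hb : ∀ k : ℕ, b + (k : ℂ) ≠ 0)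
    (hc : ∀ k : ℕ, c + (k : ℂ) ≠ 0)
    (w lam : ℕ → ℂ)
    (hw : ∀ k : ℕ, w k = poch a k * poch b k / ((Nat.factorial k : ℂ) * poch c k))
    (hl0 : lam 0 = 0)
    (hl : ∀ n : ℕ, 1 ≤ n → lam n = -∑ k ∈ range n, w k / ((n : ℂ) - (k : ℂ))) :
    lam 1 = -1 ∧
    ∀ n : ℕ, 1 ≤ n →
      lam (n + 1) =
        (2 * (n : ℂ) ^ 2 + (a + b + c - 1) * n + a * b) / (((n : ℂ) + 1) * (n + c)) * lam n
        - (n + a - 1) * (n + b - 1) / (((n : ℂ) + 1) * (n + c)) * lam (n - 1)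
        + ((c - b - a) * (n : ℂ) ^ 2 + (a + b - 2 * a * b) * n - c * (a - 1) * (b - 1)) /
            (((n : ℂ) + 1) * (n + a - 1) * (n + b - 1) * (n + c)) * w n := by
  -- basic facts
  have hw0 : w 0 = 1 := by simp [hw 0, poch]
  have hwrec : ∀ k : ℕ, ((k : ℂ) + 1) * (c + k) * w (k + 1) = (a + k) * (b + k) * w k := by
    intro k
    have hfac : ((Nat.factorial k : ℕ) : ℂ) ≠ 0 := Nat.cast_ne_zero.mpr (Nat.factorial_ne_zero k)
    have hpc : poch c k ≠ 0 := poch_ne_zero_s6 c hc k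
    have hk1 : ((k : ℂ) + 1) ≠ 0 := by
      have : ((k : ℂ) + 1) = ((k + 1 : ℕ) : ℂ) := by push_cast; ring
      rw [this]
      exact Nat.cast_ne_zero.mpr (Nat.succ_ne_zero k)
    have hck : (c + (k : ℂ)) ≠ 0 := hc k
    have hfs : ((Nat.factorial (k + 1) : ℕ) : ℂ) = ((k : ℂ) + 1) * (Nat.factorial k : ℂ) := by
      rw [Nat.factorial_succ]; push_cast; ring
    rw [hw (k + 1), hw k]
    unfold poch
    unfold poch at hpc
    rw [ascPochhammer_succ_eval, ascPochhammer_succ_eval, ascPochhammer_succ_eval, hfs]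
    rw [mul_div_assoc', mul_div_assoc',
      div_eq_div_iff (mul_ne_zero (mul_ne_zero hk1 hfac) (mul_ne_zero hpc hck))
        (mul_ne_zero hfac hpc)]
    ring
  have hl1 : lam 1 = -1 := by
    rw [hl 1 le_rfl]
    simp [hw0]
  refine ⟨hl1, ?_⟩
  -- key lemma C(n)
  have key : ∀ n : ℕ, ((n : ℂ) + 1) * ((n : ℂ) + c) * lam (n + 1)
      - ((n : ℂ) + a) * ((n : ℂ) + b) * lam n
      = -(2 * (n : ℂ) + c) * w n - (c - a - b) * ∑ k ∈ range n, w k := by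
    intro n
    rcases Nat.eq_zero_or_pos n with rfl | hn
    · simp only [Nat.cast_zero, hl0, hl1, range_zero, sum_empty]
      ring_nf
      simp [hw0]
    · -- telescoping certificate f k = w k * (k * (c + k - 1)) / (n + 1 - k)
      set f : ℕ → ℂ := fun k => w k * ((k : ℂ) * (c + (k : ℂ) - 1)) / (((n : ℂ) + 1) - (k : ℂ))
        with hf
      have htel : ∑ k ∈ range n, (f (k + 1) - f k) = f n - f 0 := Finset.sum_range_sub f n
      have hterm : ∀ k ∈ range n, f (k + 1) - f k
          = -(((n : ℂ) + 1) * ((n : ℂ) + c)) * (w k / (((n : ℂ) + 1) - (k : ℂ)))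
            + ((n : ℂ) + a) * ((n : ℂ) + b) * (w k / ((n : ℂ) - (k : ℂ)))
            + (c - a - b) * w k := by
        intro k hk
        have hkn : k < n := mem_range.mp hk
        have h1 : ((n : ℂ) - (k : ℂ)) ≠ 0 := by
          rw [sub_ne_zero]
          exact_mod_cast (Nat.ne_of_lt hkn).symm
        have h2 : (((n : ℂ) + 1) - (k : ℂ)) ≠ 0 := by
          have : ((n : ℂ) + 1) = ((n + 1 : ℕ) : ℂ) := by push_cast; ring
          rw [this, sub_ne_zero]
          exact_mod_cast (Nat.ne_of_lt (Nat.lt_succ_of_lt hkn)).symm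
        have hk1 : ((k : ℂ) + 1) ≠ 0 := by
          have : ((k : ℂ) + 1) = ((k + 1 : ℕ) : ℂ) := by push_cast; ring
          rw [this]
          exact Nat.cast_ne_zero.mpr (Nat.succ_ne_zero k)
        have hck : (c + (k : ℂ)) ≠ 0 := hc k
        have hrec := hwrec k
        have hw1 : w (k + 1) = (a + k) * (b + k) * w k / (((k : ℂ) + 1) * (c + k)) := by
          field_simp
          linear_combination hrec
        rw [hf]
        simp only [Nat.cast_add, Nat.cast_one]
        rw [hw1]
        have hnk1 : ((n : ℂ) + 1) - ((k : ℂ) + 1) = (n : ℂ) - (k : ℂ) := by ring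
        rw [hnk1]
        field_simp
        ring
      rw [Finset.sum_congr rfl hterm] at htel
      rw [Finset.sum_add_distrib, Finset.sum_add_distrib, ← Finset.mul_sum, ← Finset.mul_sum,
        ← Finset.mul_sum] at htel
      -- rewrite lam values
      have hlam1 : lam (n + 1) = -∑ k ∈ range (n + 1), w k / (((n : ℂ) + 1) - (k : ℂ)) := by
        have := hl (n + 1) (Nat.le_add_left 1 n)
        rw [this]
        congr 1
        apply Finset.sum_congr rfl
        intro k _
        push_cast
        ring_nf
      have hlamn : lam n = -∑ k ∈ range n, w k / ((n : ℂ) - (k : ℂ)) := hl n hn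
      -- split the (n+1) sum
      have hsplit : ∑ k ∈ range (n + 1), w k / (((n : ℂ) + 1) - (k : ℂ))
          = (∑ k ∈ range n, w k / (((n : ℂ) + 1) - (k : ℂ))) + w n := by
        rw [Finset.sum_range_succ]
        congr 1
        rw [add_sub_cancel_left, div_one]
      have hfn : f n = w n * ((n : ℂ) * (c + (n : ℂ) - 1)) := by
        rw [hf]
        simp only []
        rw [add_sub_cancel_left, mul_div_assoc, div_one]
      have hf0 : f 0 = 0 := by simp [hf]
      rw [hfn, hf0, sub_zero] at htel
      rw [hlam1, hlamn, hsplit]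
      linear_combination htel
  -- derive the recurrence from key n and key (n-1)
  intro n hn
  obtain ⟨m, rfl⟩ : ∃ m, n = m + 1 := ⟨n - 1, (Nat.succ_pred_eq_of_pos hn).symm⟩
  have h1 := key (m + 1)
  have h2 := key m
  have hsum : ∑ k ∈ range (m + 1), w k = (∑ k ∈ range m, w k) + w m :=
    Finset.sum_range_succ w m
  have hwm := hwrec m
  -- nonzero facts
  have hne1 : ((m : ℂ) + 1) + 1 ≠ 0 := by
    have : ((m : ℂ) + 1) + 1 = ((m + 2 : ℕ) : ℂ) := by push_cast; ring
    rw [this]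
    exact Nat.cast_ne_zero.mpr (by omega)
  have hnec : ((m : ℂ) + 1) + c ≠ 0 := by
    intro h; exact hc (m + 1) (by push_cast; linear_combination h)
  have hnea : ((m : ℂ) + 1) + a - 1 ≠ 0 := by
    have := ha m
    intro h
    exact this (by linear_combination h)
  have hneb : ((m : ℂ) + 1) + b - 1 ≠ 0 := by
    have := hb m
    intro h
    exact this (by linear_combination h)
  simp only [Nat.add_sub_cancel]
  push_cast at h1 h2 ⊢
  rw [hsum] at h1
  have hma : (m : ℂ) + a ≠ 0 := by
    have := ha m; intro h; exact this (by linear_combination h)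
  have hmb : (m : ℂ) + b ≠ 0 := by
    have := hb m; intro h; exact this (by linear_combination h)
  have main : (((m:ℂ)+1)+1) * (((m:ℂ)+1)+c) * (((m:ℂ)+a) * ((m:ℂ)+b)) * lam (m + 1 + 1)
      = (2*((m:ℂ)+1)^2+(a+b+c-1)*((m:ℂ)+1)+a*b) * (((m:ℂ)+a)*((m:ℂ)+b)) * lam (m+1)
        - (((m:ℂ)+a)*((m:ℂ)+b))^2 * lam m
        + ((c-b-a)*((m:ℂ)+1)^2+(a+b-2*a*b)*((m:ℂ)+1)-c*(a-1)*(b-1)) * w (m+1) := by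
    linear_combination (((m:ℂ)+a)*((m:ℂ)+b)) * h1 - (((m:ℂ)+a)*((m:ℂ)+b)) * h2
      - (2*(m:ℂ)+a+b) * hwm
  have hD : (((m:ℂ)+1)+1) * (((m:ℂ)+1)+c) * (((m:ℂ)+a) * ((m:ℂ)+b)) ≠ 0 :=
    mul_ne_zero (mul_ne_zero hne1 hnec) (mul_ne_zero hma hmb)
  generalize hL2 : lam (m + 1 + 1) = L2 at main ⊢
  generalize hL1 : lam (m + 1) = L1 at main ⊢
  generalize hL0 : lam m = L0 at main ⊢
  generalize hW : w (m + 1) = W at main ⊢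
  apply mul_left_cancel₀ hD
  rw [main]
  field_simp [hne1, hnec, hnea, hneb]
  ring
end

section
/- Let θ, p, α, β, z ∈ ℂ with β not a nonpositive integer, |z| < 1, |θz| < 1, and 1+θz, 1+z not nonpositive real numbers. For n ∈ ℕ define v_n = ∑_{k=0}^{n} ((α)_k/k!) · θ^{n−k} · (−p)_{n−k}/(n−k)!. Then: (i) the series ∑_{n≥0} v_n (−z)^n converges with sum equal to (1+θz)^p · (1+z)^{−α}; (ii) v_0 = 1, v_1 = α − pθ, v_2 = (1/2)θ²p(p−1) − θpα + (1/2)α(α+1), and for every integer n ≥ 2, v_{n+1} = μ(n)v_n/((n+1)(n+β)) − θ·ζ(n)v_{n−1}/((n+1)(n+β)) + θ²·σ(n)v_{n−2}/((n+1)(n+β)), where μ(n) = (n+α)(n+β) + θ(2n² − 2n(p−β+1) − βp), ζ(n) = 2n² + 2(α+β−p−2)n − (α+β−1)p + 2(α−1)(β−1) + θ(n−p−1)(n−p+β−2), and σ(n) = (n+α−p−2)(n+β−p−2). -/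
open Finset

lemma pR_succ (b : ℝ) (k : ℕ) :
    (ascPochhammer ℝ (k + 1)).eval b = (ascPochhammer ℝ k).eval b * (b + k) := by
  simp [ascPochhammer_succ_right]

lemma abs_poch_le (α : ℂ) (b : ℝ) (hb : 0 < b) (h : ‖α‖ ≤ b) (k : ℕ) :
    ‖poch α k‖ ≤ (ascPochhammer ℝ k).eval b := by
  induction k with
  | zero => simp [poch]
  | succ k ih =>
      rw [poch_succ, pR_succ, norm_mul]
      have h1 : ‖α + k‖ ≤ b + k := by
        calc ‖α + k‖ ≤ ‖α‖ + ‖(k : ℂ)‖ := norm_add_le _ _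
        _ ≤ b + k := by simp only [Complex.norm_natCast]; linarith
      exact mul_le_mul ih h1 (norm_nonneg _) (le_of_lt (ascPochhammer_pos k b hb))

lemma master (b t : ℝ) (hb : 1 ≤ b) (ht0 : 0 ≤ t) (ht : t < 1) :
    Summable (fun k : ℕ =>
      ((k : ℝ) + b) * ((ascPochhammer ℝ k).eval b / (Nat.factorial k : ℝ)) * t ^ k) := by
  have hb0 : (0:ℝ) < b := lt_of_lt_of_le one_pos hb
  rcases eq_or_lt_of_le ht0 with h0 | h0
  · apply summable_of_ne_finset_zero (s := {0})
    intro k hk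
    have : k ≠ 0 := by simpa using hk
    rw [← h0, zero_pow this, mul_zero]
  · set f : ℕ → ℝ := fun k =>
      ((k : ℝ) + b) * ((ascPochhammer ℝ k).eval b / (Nat.factorial k : ℝ)) * t ^ k with hf
    have hpos : ∀ k, 0 < f k := by
      intro k
      have h1 := ascPochhammer_pos k b hb0
      have h2 : (0:ℝ) < (Nat.factorial k : ℝ) := by positivity
      have : (0:ℝ) < (k : ℝ) + b := by positivity
      positivity
    apply summable_of_ratio_test_tendsto_lt_one ht
    · exact Filter.Eventually.of_forall fun k => (hpos k).ne'
    · have key : ∀ k : ℕ, ‖f (k + 1)‖ / ‖f k‖ = (1 + b / ((k : ℝ) + 1)) * t := by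
        intro k
        rw [Real.norm_eq_abs, Real.norm_eq_abs, abs_of_pos (hpos k), abs_of_pos (hpos (k + 1))]
        have h1 := ascPochhammer_pos k b hb0
        have h2 : (0:ℝ) < (Nat.factorial k : ℝ) := by positivity
        have hk1 : (0:ℝ) < (k : ℝ) + 1 := by positivity
        simp only [hf, pR_succ, Nat.factorial_succ]
        push_cast
        field_simp
        ring
      have : Filter.Tendsto (fun k : ℕ => (1 + b / ((k : ℝ) + 1)) * t)
          Filter.atTop (nhds ((1 + 0) * t)) := by
        apply Filter.Tendsto.mul_const
        apply Filter.Tendsto.const_add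
        apply Filter.Tendsto.div_atTop tendsto_const_nhds
        exact Filter.tendsto_atTop_add_const_right _ _ tendsto_natCast_atTop_atTop
      simp only [add_zero, one_mul] at this
      exact (Filter.Tendsto.congr (fun k => (key k).symm)) this

lemma hc_rec (α : ℂ) (k : ℕ) :
    ((k : ℂ) + 1) * (poch α (k + 1) / (Nat.factorial (k + 1) : ℂ)) =
      (α + k) * (poch α k / (Nat.factorial k : ℂ)) := by
  have hk : ((Nat.factorial k : ℂ)) ≠ 0 := Nat.cast_ne_zero.mpr (Nat.factorial_ne_zero k)
  have hk1 : ((k : ℂ) + 1) ≠ 0 := Nat.cast_add_one_ne_zero k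
  rw [poch_succ, Nat.factorial_succ]
  push_cast
  field_simp

lemma binSummableNormAux (α : ℂ) (x : ℂ) (t : ℝ) (hxt : ‖x‖ ≤ t) (ht : t < 1) :
    Summable (fun k : ℕ => ‖poch α k / (Nat.factorial k : ℂ) * x ^ k‖) := by
  set b : ℝ := ‖α‖ + 1 with hbdef
  have hb : 1 ≤ b := by have := norm_nonneg α; linarith
  have hb0 : (0:ℝ) < b := by positivity
  have ht0 : 0 ≤ t := le_trans (norm_nonneg x) hxt
  refine Summable.of_nonneg_of_le (fun k => norm_nonneg _) (fun k => ?_) (master b t hb ht0 ht)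
  have hD : (0:ℝ) ≤ (ascPochhammer ℝ k).eval b := le_of_lt (ascPochhammer_pos k b hb0)
  have habs : ‖poch α k‖ ≤ (ascPochhammer ℝ k).eval b :=
    abs_poch_le α b hb0 (by simp [hbdef]) k
  have h1 : ‖poch α k / (Nat.factorial k : ℂ) * x ^ k‖ ≤
      ((ascPochhammer ℝ k).eval b / (Nat.factorial k : ℝ)) * t ^ k := by
    rw [norm_mul, norm_div, norm_pow]
    have hfac : ‖(Nat.factorial k : ℂ)‖ = (Nat.factorial k : ℝ) := by
      simp [Complex.norm_natCast]
    rw [hfac]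
    apply mul_le_mul
    · apply div_le_div_of_nonneg_right _ (by positivity)
      · simpa using habs
    · exact pow_le_pow_left₀ (norm_nonneg x) (by simpa using hxt) k
    · positivity
    · positivity
  calc ‖poch α k / (Nat.factorial k : ℂ) * x ^ k‖ ≤
      ((ascPochhammer ℝ k).eval b / (Nat.factorial k : ℝ)) * t ^ k := h1
    _ ≤ ((k : ℝ) + b) * (((ascPochhammer ℝ k).eval b / (Nat.factorial k : ℝ)) * t ^ k) := by
        apply le_mul_of_one_le_left (by positivity)
        have : (0:ℝ) ≤ (k:ℝ) := Nat.cast_nonneg k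
        linarith
    _ = _ := by ring

lemma binSeries (α w₀ : ℂ) (hw : ‖w₀‖ < 1) :
    HasSum (fun k : ℕ => poch α k / (Nat.factorial k : ℂ) * w₀ ^ k)
      ((1 - w₀) ^ (-α)) := by
  classical
  set c : ℕ → ℂ := fun k => poch α k / (Nat.factorial k : ℂ) with hcdef
  set ρ : ℝ := (‖w₀‖ + 1) / 2 with hρdef
  have hw0 : 0 ≤ ‖w₀‖ := norm_nonneg w₀
  have hρ0 : 0 < ρ := by positivity
  have hwρ : ‖w₀‖ < ρ := by rw [hρdef]; linarith
  have hρ1 : ρ < 1 := by rw [hρdef]; linarith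
  set b : ℝ := ‖α‖ + 1 with hbdef
  have hb : 1 ≤ b := by have := norm_nonneg α; linarith
  have hb0 : (0:ℝ) < b := by positivity
  set D : ℕ → ℝ := fun k => (ascPochhammer ℝ k).eval b / (Nat.factorial k : ℝ) with hDdef
  have hD0 : ∀ k, 0 < D k := fun k => by
    have := ascPochhammer_pos k b hb0
    have h2 : (0:ℝ) < (Nat.factorial k : ℝ) := by positivity
    positivity
  have habsc : ∀ k, ‖c k‖ ≤ D k := by
    intro k
    rw [hcdef, hDdef]
    simp only [norm_div, Complex.norm_natCast]
    exact div_le_div_of_nonneg_right (abs_poch_le α b hb0 (by simp [hbdef]) k)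
      (by positivity)
  -- the ball
  set t : Set ℂ := Metric.ball (0:ℂ) ρ with htdef
  have hmem : ∀ y : ℂ, y ∈ t → ‖y‖ < ρ := by
    intro y hy
    simpa [htdef, Complex.dist_eq] using hy
  have hw₀t : w₀ ∈ t := by simp [htdef, Complex.dist_eq]; exact hwρ
  have h0t : (0:ℂ) ∈ t := by simp [htdef]; exact hρ0
  -- derivative bound
  set u : ℕ → ℝ := fun n => ((n : ℝ) + b) * D n * ρ ^ n / ρ with hudef
  have hSu : Summable u := (master b ρ hb (le_of_lt hρ0) hρ1).div_const ρ
  have hubound : ∀ (n : ℕ) (y : ℂ), y ∈ t →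
      ‖c n * ((n : ℂ) * y ^ (n - 1))‖ ≤ u n := by
    intro n y hy
    have hyρ : ‖y‖ ≤ ρ := le_of_lt (hmem y hy)
    cases n with
    | zero =>
        simp only [Nat.cast_zero, zero_mul, mul_zero, norm_zero, hudef]
        have := hD0 0
        positivity
    | succ m =>
        have : ‖c (m + 1) * (((m:ℂ) + 1) * y ^ m)‖ ≤ D (m + 1) * (((m:ℝ) + 1) * ρ ^ m) := by
          rw [norm_mul, norm_mul, norm_pow]
          apply mul_le_mul
          · simpa using habsc (m + 1)
          · apply mul_le_mul
            · rw [show ((m:ℂ) + 1) = ((m + 1 : ℕ) : ℂ) by push_cast; ring,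
                Complex.norm_natCast]
              push_cast
              exact le_refl _
            · exact pow_le_pow_left₀ (norm_nonneg y)
                (by simpa using hyρ) m
            · positivity
            · positivity
          · positivity
          · exact le_of_lt (hD0 (m + 1))
        calc ‖c (m + 1) * (((m + 1 : ℕ):ℂ) * y ^ (m + 1 - 1))‖
            = ‖c (m + 1) * (((m:ℂ) + 1) * y ^ m)‖ := by norm_num
          _ ≤ D (m + 1) * (((m:ℝ) + 1) * ρ ^ m) := this
          _ ≤ u (m + 1) := by
              have h1 : (0:ℝ) < ρ ^ m := by positivity
              have h3 : u (m + 1) = (((m:ℝ) + 1) + b) * D (m + 1) * ρ ^ m := by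
                simp only [hudef]
                push_cast
                rw [pow_succ]
                field_simp
              rw [h3]
              nlinarith [mul_pos hb0 (mul_pos (hD0 (m + 1)) h1)]
  -- summability of the series itself at points of the ball
  have hsummable : ∀ y : ℂ, ‖y‖ < 1 → Summable (fun k => c k * y ^ k) := by
    intro y hy
    exact (binSummableNormAux α y (‖y‖) le_rfl hy).of_norm
  -- the sum function
  set G : ℂ → ℂ := fun w => ∑' n, c n * w ^ n with hGdef
  -- derivative of G on the ball
  have hderiv : ∀ w ∈ t, HasDerivAt G (∑' n, c n * ((n : ℂ) * w ^ (n - 1))) w := by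
    intro w hwt
    apply hasDerivAt_tsum_of_isPreconnected hSu Metric.isOpen_ball
      (Convex.isPreconnected (convex_ball 0 ρ))
      (g := fun (n : ℕ) (y : ℂ) => c n * y ^ n)
      (g' := fun (n : ℕ) (y : ℂ) => c n * ((n : ℂ) * y ^ (n - 1)))
      (fun n y _ => by simpa using (hasDerivAt_pow n y).const_mul (c n))
      hubound h0t (by apply hsummable 0; simp) hwt
  -- the ODE : (1 - w) * G' w = α * G w  on the ball
  have hODE : ∀ w ∈ t, (1 - w) * (∑' n, c n * ((n : ℂ) * w ^ (n - 1))) = α * G w := by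
    intro w hwt
    have hwρ' : ‖w‖ ≤ ρ := le_of_lt (hmem w hwt)
    have hw1 : ‖w‖ < 1 := lt_of_lt_of_le (hmem w hwt) (le_of_lt hρ1)
    have sG' : Summable (fun n => c n * ((n : ℂ) * w ^ (n - 1))) := by
      apply Summable.of_norm_bounded hSu
      intro n; exact hubound n w hwt
    have sA : Summable (fun n : ℕ => (α + (n:ℂ)) * c n * w ^ n) := by
      apply Summable.of_norm
      refine Summable.of_nonneg_of_le (fun k => norm_nonneg _) (fun k => ?_)
        (master b (‖w‖) hb (norm_nonneg w) hw1)
      rw [norm_mul, norm_mul, norm_pow]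
      apply mul_le_mul
      · apply mul_le_mul
        · calc ‖α + (k:ℂ)‖ ≤ ‖α‖ + ‖(k:ℂ)‖ := norm_add_le _ _
            _ ≤ (k:ℝ) + b := by
                simp [hbdef]; linarith
        · simpa using habsc k
        · positivity
        · positivity
      · exact le_rfl
      · positivity
      · have := hD0 k; positivity
    have sB : Summable (fun n : ℕ => (n:ℂ) * c n * w ^ n) := by
      apply Summable.of_norm
      refine Summable.of_nonneg_of_le (fun k => norm_nonneg _) (fun k => ?_)
        (master b (‖w‖) hb (norm_nonneg w) hw1)
      rw [norm_mul, norm_mul, norm_pow]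
      apply mul_le_mul
      · apply mul_le_mul
        · simp; linarith
        · simpa using habsc k
        · positivity
        · positivity
      · exact le_rfl
      · positivity
      · have := hD0 k; positivity
    have step1 : (∑' n, c n * ((n : ℂ) * w ^ (n - 1)))
        = ∑' n : ℕ, (α + (n:ℂ)) * c n * w ^ n := by
      rw [sG'.tsum_eq_zero_add]
      simp only [Nat.cast_zero, zero_mul, mul_zero, zero_add]
      apply tsum_congr
      intro m
      have h := hc_rec α m
      have h2 : c (m + 1) * (((m + 1 : ℕ):ℂ) * w ^ (m + 1 - 1))
          = (α + (m:ℂ)) * c m * w ^ m := by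
        simp only [Nat.add_sub_cancel, hcdef]
        push_cast
        linear_combination w ^ m * h
      exact h2
    have step2 : w * (∑' n, c n * ((n : ℂ) * w ^ (n - 1)))
        = ∑' n : ℕ, (n:ℂ) * c n * w ^ n := by
      rw [← tsum_mul_left]
      apply tsum_congr
      intro n
      cases n with
      | zero => simp
      | succ m =>
          simp only [Nat.add_sub_cancel]
          push_cast
          ring
    have expand : (1 - w) * (∑' n, c n * ((n : ℂ) * w ^ (n - 1)))
        = (∑' n : ℕ, (α + (n:ℂ)) * c n * w ^ n) - ∑' n : ℕ, (n:ℂ) * c n * w ^ n := by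
      rw [sub_mul, one_mul, step2, step1]
    rw [expand, ← sA.tsum_sub sB,
      show α * G w = α * ∑' n : ℕ, c n * w ^ n from rfl, ← tsum_mul_left]
    apply tsum_congr
    intro n
    ring
  -- F := (1-w)^α * G w  is locally constant on the ball
  have hslit : ∀ w ∈ t, (1 - w) ∈ Complex.slitPlane := by
    intro w hwt
    rw [Complex.mem_slitPlane_iff]
    left
    have h1 : w.re ≤ ‖w‖ := Complex.re_le_norm w
    have h2 : ‖w‖ < 1 := lt_of_lt_of_le (hmem w hwt) (le_of_lt hρ1)
    simp only [Complex.sub_re, Complex.one_re]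
    linarith
  have hne : ∀ w ∈ t, (1 - w) ≠ 0 := fun w hwt =>
    Complex.slitPlane_ne_zero (hslit w hwt)
  set F : ℂ → ℂ := fun w => (1 - w) ^ α * G w with hFdef
  have hFderiv : ∀ w ∈ t, HasDerivAt F 0 w := by
    intro w hwt
    have h1 : HasDerivAt (fun w : ℂ => (1 - w) ^ α) (α * (1 - w) ^ (α - 1) * (-1)) w := by
      exact HasDerivAt.cpow_const ((hasDerivAt_id w).const_sub 1) (hslit w hwt)
    have h2 := (h1.mul (hderiv w hwt))
    have key : α * (1 - w) ^ (α - 1) * (-1) * G w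
        + (1 - w) ^ α * (∑' n, c n * ((n : ℂ) * w ^ (n - 1))) = 0 := by
      have hα1 : (1 - w) ^ (α - 1) = (1 - w) ^ α / (1 - w) := by
        rw [Complex.cpow_sub _ _ (hne w hwt), Complex.cpow_one]
      rw [hα1]
      have h0 := hODE w hwt
      have hx := hne w hwt
      have hrw : α * ((1 - w) ^ α / (1 - w)) * (-1) * G w
          + (1 - w) ^ α * (∑' n, c n * ((n : ℂ) * w ^ (n - 1)))
          = ((1 - w) ^ α / (1 - w)) *
            ((1 - w) * (∑' n, c n * ((n : ℂ) * w ^ (n - 1))) - α * G w) := by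
        field_simp
        ring
      rw [hrw, h0, sub_self, mul_zero]
    show HasDerivAt (fun w => (1 - w) ^ α * G w) 0 w
    exact key ▸ h2
  -- constancy along the segment from 0 to w₀
  have hseg : ∀ s : ℝ, s ∈ Set.Icc (0:ℝ) 1 → ((s:ℂ) * w₀) ∈ t := by
    intro s hs
    have : ‖(s:ℂ) * w₀‖ = |s| * ‖w₀‖ := by
      simp [Complex.norm_real]
    simp only [htdef, Metric.mem_ball, Complex.dist_eq, sub_zero]
    rw [this]
    have habs : |s| ≤ 1 := by rw [abs_le]; constructor <;> [linarith [hs.1]; linarith [hs.2]]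
    calc |s| * ‖w₀‖ ≤ 1 * ‖w₀‖ := by
          apply mul_le_mul_of_nonneg_right habs hw0
      _ < ρ := by rw [one_mul]; exact hwρ
  set φ : ℝ → ℂ := fun s => F ((s:ℂ) * w₀) with hφdef
  have hφderiv : ∀ s ∈ Set.Icc (0:ℝ) 1, HasDerivAt φ 0 s := by
    intro s hs
    have hF' := hFderiv _ (hseg s hs)
    have h1 : HasDerivAt (fun u : ℂ => F (u * w₀)) (0 * w₀) ((s:ℂ)) :=
      by have := HasDerivAt.comp ((s:ℂ)) hF' (hasDerivAt_mul_const (x := (s:ℂ)) w₀); exact this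
    have := h1.comp_ofReal
    simpa [hφdef] using this
  have hconst : φ 1 = φ 0 := by
    have := constant_of_has_deriv_right_zero
      (f := φ) (a := 0) (b := 1)
      (fun s hs => (hφderiv s hs).continuousAt.continuousWithinAt)
      (fun s hs => ((hφderiv s (Set.mem_Icc_of_Ico hs)).hasDerivWithinAt))
    exact this 1 (by norm_num)
  have hG0 : G 0 = 1 := by
    have hrfl : G 0 = ∑' n : ℕ, c n * (0:ℂ) ^ n := rfl
    rw [hrfl, tsum_eq_single 0 (fun n hn => by simp [zero_pow hn])]
    simp [hcdef, poch_zero]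
  have hF0 : F 0 = 1 := by
    show (1 - (0:ℂ)) ^ α * G 0 = 1
    simp [hG0, Complex.one_cpow]
  have hFw₀ : F w₀ = 1 := by
    have h1 : φ 1 = F w₀ := by simp [hφdef]
    have h0 : φ 0 = F 0 := by simp [hφdef]
    rw [← h1, hconst, h0, hF0]
  -- conclude
  have hGw₀ : G w₀ = (1 - w₀) ^ (-α) := by
    rw [Complex.cpow_neg]
    exact eq_inv_of_mul_eq_one_left (by rw [mul_comm]; exact hFw₀)
  have hsum := (hsummable w₀ hw).hasSum
  rw [show (∑' (k : ℕ), c k * w₀ ^ k) = G w₀ from rfl, hGw₀] at hsum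
  exact hsum

noncomputable def aa (α : ℂ) (k : ℕ) : ℂ := poch α k / (Nat.factorial k : ℂ)
noncomputable def bb (θ p : ℂ) (k : ℕ) : ℂ :=
  θ ^ k * poch (-p) k / (Nat.factorial k : ℂ)

lemma aa_rec (α : ℂ) (k : ℕ) : ((k:ℂ) + 1) * aa α (k + 1) = (α + k) * aa α k :=
  hc_rec α k

lemma bb_rec (θ p : ℂ) (k : ℕ) :
    ((k:ℂ) + 1) * bb θ p (k + 1) = θ * ((k:ℂ) - p) * bb θ p k := by
  have h := hc_rec (-p) k
  unfold bb
  linear_combination θ ^ (k + 1) * h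

noncomputable def VV (α θ p : ℂ) (n : ℕ) : ℂ :=
  ∑ k ∈ Finset.range (n + 1), aa α k * bb θ p (n - k)

noncomputable def SS (α θ p : ℂ) (n : ℕ) : ℂ :=
  ∑ k ∈ Finset.range (n + 1), (k : ℂ) * (aa α k * bb θ p (n - k))

lemma E2 (α θ p : ℂ) (m : ℕ) :
    SS α θ p (m + 1) = α * VV α θ p m + SS α θ p m := by
  unfold SS VV
  rw [Finset.sum_range_succ']
  have h1 : ∀ i ∈ Finset.range (m + 1),
      (((i + 1 : ℕ)) : ℂ) * (aa α (i + 1) * bb θ p (m + 1 - (i + 1)))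
        = α * (aa α i * bb θ p (m - i)) + (i : ℂ) * (aa α i * bb θ p (m - i)) := by
    intro i hi
    have hsub : m + 1 - (i + 1) = m - i := by omega
    rw [hsub]
    have h := aa_rec α i
    push_cast
    linear_combination bb θ p (m - i) * h
  rw [Finset.sum_congr rfl h1]
  rw [Finset.sum_add_distrib, ← Finset.mul_sum]
  simp

lemma E1 (α θ p : ℂ) (m : ℕ) :
    ((m:ℂ) + 1) * VV α θ p (m + 1)
      = (α + θ * ((m:ℂ) - p)) * VV α θ p m + (1 - θ) * SS α θ p m := by
  have hsplit : ((m:ℂ) + 1) * VV α θ p (m + 1)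
      = SS α θ p (m + 1)
        + ∑ k ∈ Finset.range (m + 2),
            ((m + 1 - k : ℕ) : ℂ) * (aa α k * bb θ p (m + 1 - k)) := by
    unfold VV SS
    rw [Finset.mul_sum, ← Finset.sum_add_distrib]
    apply Finset.sum_congr rfl
    intro k hk
    have hk' : k ≤ m + 1 := by
      have := Finset.mem_range.mp hk; omega
    rw [Nat.cast_sub hk']
    push_cast
    ring
  have hT : ∑ k ∈ Finset.range (m + 2),
      ((m + 1 - k : ℕ) : ℂ) * (aa α k * bb θ p (m + 1 - k))
      = θ * ((m:ℂ) - p) * VV α θ p m - θ * SS α θ p m := by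
    rw [Finset.sum_range_succ]
    simp only [Nat.sub_self, Nat.cast_zero, zero_mul, add_zero]
    have hcongr : ∀ k ∈ Finset.range (m + 1),
        ((m + 1 - k : ℕ) : ℂ) * (aa α k * bb θ p (m + 1 - k))
          = θ * ((m:ℂ) - p) * (aa α k * bb θ p (m - k))
            - θ * ((k : ℂ) * (aa α k * bb θ p (m - k))) := by
      intro k hk
      have hk' : k ≤ m := by have := Finset.mem_range.mp hk; omega
      have h1 : m + 1 - k = (m - k) + 1 := by omega
      rw [h1]
      have h2 := bb_rec θ p (m - k)
      have h3 : ((m - k : ℕ) : ℂ) = (m : ℂ) - (k : ℂ) := by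
        rw [Nat.cast_sub hk']
      rw [h3] at h2
      push_cast
      rw [h3]
      linear_combination aa α k * h2
    rw [Finset.sum_congr rfl hcongr, Finset.sum_sub_distrib,
      ← Finset.mul_sum, ← Finset.mul_sum]
    unfold VV SS
    rfl
  rw [hsplit, hT, E2]
  ring

lemma R3 (α θ p : ℂ) (j : ℕ) :
    ((j:ℂ) + 2) * VV α θ p (j + 2)
      = ((j:ℂ) + 1 + α + θ * ((j:ℂ) + 1 - p)) * VV α θ p (j + 1)
        + θ * (p - α - (j:ℂ)) * VV α θ p j := by
  have e1 := E1 α θ p (j + 1)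
  have e1' := E1 α θ p j
  have e2 := E2 α θ p j
  push_cast at e1
  linear_combination e1 + (1 - θ) * e2 - e1'

lemma poch_one' (w : ℂ) : poch w 1 = w := by
  simp [poch, ascPochhammer_one]

lemma poch_two (w : ℂ) : poch w 2 = w * (w + 1) := by
  have h := poch_succ w 1
  rw [poch_one'] at h
  simpa using h

theorem stmt_15 (θ p α β z : ℂ) (hβ : ∀ k : ℕ, β + (k : ℂ) ≠ 0)
    (hz : ‖z‖ < 1) (hθz : ‖θ * z‖ < 1)
    (hpos1 : ∀ r : ℝ, r ≤ 0 → (1 + θ * z) ≠ (r : ℂ))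
    (hpos2 : ∀ r : ℝ, r ≤ 0 → (1 + z) ≠ (r : ℂ))
    (v : ℕ → ℂ)
    (hv : ∀ n : ℕ, v n = ∑ k ∈ range (n + 1),
      poch α k / (Nat.factorial k : ℂ) *
        (θ ^ (n - k) * poch (-p) (n - k) / (Nat.factorial (n - k) : ℂ))) :
    HasSum (fun n : ℕ => v n * (-z) ^ n) ((1 + θ * z) ^ p * (1 + z) ^ (-α)) ∧
    v 0 = 1 ∧
    v 1 = α - p * θ ∧
    v 2 = (1 / 2) * θ ^ 2 * p * (p - 1) - θ * p * α + (1 / 2) * α * (α + 1) ∧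
    ∀ n : ℕ, 2 ≤ n →
      v (n + 1) =
        ((n + α) * (n + β) + θ * (2 * (n : ℂ) ^ 2 - 2 * n * (p - β + 1) - β * p)) *
            v n / (((n : ℂ) + 1) * (n + β))
        - θ * (2 * (n : ℂ) ^ 2 + 2 * (α + β - p - 2) * n - (α + β - 1) * p
              + 2 * (α - 1) * (β - 1) + θ * (n - p - 1) * (n - p + β - 2)) *
            v (n - 1) / (((n : ℂ) + 1) * (n + β))
        + θ ^ 2 * ((n + α - p - 2) * (n + β - p - 2)) *
            v (n - 2) / (((n : ℂ) + 1) * (n + β)) := by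
  have hveq : ∀ n : ℕ, v n = VV α θ p n := by
    intro n
    rw [hv n]
    unfold VV aa bb
    apply Finset.sum_congr rfl
    intro k _
    ring
  refine ⟨?_, ?_, ?_, ?_, ?_⟩
  · -- the HasSum statement
    set f : ℕ → ℂ := fun k => aa α k * (-z) ^ k with hfdef
    set g : ℕ → ℂ := fun m => bb θ p m * (-z) ^ m with hgdef
    have hzneg : ‖-z‖ < 1 := by rwa [norm_neg]
    have hθzneg : ‖-(θ * z)‖ < 1 := by rwa [norm_neg]
    have hgform : ∀ m : ℕ, g m = poch (-p) m / (Nat.factorial m : ℂ) * (-(θ * z)) ^ m := by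
      intro m
      rw [hgdef]
      show bb θ p m * (-z) ^ m = _
      unfold bb
      rw [show (-(θ * z)) = θ * (-z) by ring, mul_pow]
      ring
    have hf : Summable (fun k => ‖f k‖) := by
      have := binSummableNormAux α (-z) (‖-z‖) le_rfl hzneg
      exact this
    have hg : Summable (fun m => ‖g m‖) := by
      have := binSummableNormAux (-p) (-(θ * z)) (‖-(θ * z)‖) le_rfl hθzneg
      apply Summable.congr this
      intro m
      rw [hgform m]
    have key := hasSum_sum_range_mul_of_summable_norm hf hg
    have h1 := binSeries α (-z) hzneg
    have h2 := binSeries (-p) (-(θ * z)) hθzneg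
    have ht1 : (∑' k, f k) = (1 + z) ^ (-α) := by
      rw [show (1 : ℂ) + z = 1 - (-z) by ring] at *
      exact h1.tsum_eq
    have ht2 : (∑' m, g m) = (1 + θ * z) ^ p := by
      have h2' : HasSum g ((1 - (-(θ * z))) ^ (-(-p))) := by
        apply HasSum.congr_fun h2
        intro m
        exact hgform m
      rw [h2'.tsum_eq]
      norm_num
    rw [ht1, ht2] at key
    have hconv : (fun n : ℕ => v n * (-z) ^ n)
        = fun n => ∑ k ∈ range (n + 1), f k * g (n - k) := by
      funext n
      rw [hveq n]
      unfold VV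
      rw [Finset.sum_mul]
      apply Finset.sum_congr rfl
      intro k hk
      have hk' : k ≤ n := by have := Finset.mem_range.mp hk; omega
      have hp : (-z) ^ n = (-z) ^ k * (-z) ^ (n - k) := by
        rw [← pow_add, Nat.add_sub_cancel' hk']
      rw [hfdef, hgdef]
      show aa α k * bb θ p (n - k) * (-z) ^ n
        = (aa α k * (-z) ^ k) * (bb θ p (n - k) * (-z) ^ (n - k))
      rw [hp]
      ring
    rw [hconv, mul_comm ((1 + θ * z) ^ p) ((1 + z) ^ (-α))]
    exact key
  · rw [hv 0]
    simp [poch_zero]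
  · rw [hv 1]
    rw [Finset.sum_range_succ, Finset.sum_range_one]
    simp [poch_zero, poch_one']
    ring
  · rw [hv 2]
    rw [Finset.sum_range_succ, Finset.sum_range_succ, Finset.sum_range_one]
    simp [poch_zero, poch_one', poch_two, Nat.factorial]
    ring
  · intro n hn
    obtain ⟨j, rfl⟩ : ∃ j, n = j + 2 := ⟨n - 2, by omega⟩
    have R3v : ∀ i : ℕ, ((i:ℂ) + 2) * v (i + 2)
        = ((i:ℂ) + 1 + α + θ * ((i:ℂ) + 1 - p)) * v (i + 1)
          + θ * (p - α - (i:ℂ)) * v i := by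
      intro i
      rw [hveq (i + 2), hveq (i + 1), hveq i]
      exact R3 α θ p i
    have h1 := R3v (j + 1)
    have h2 := R3v j
    push_cast at h1
    have e1 : j + 2 - 1 = j + 1 := by omega
    have e2 : j + 2 - 2 = j := by omega
    have e3 : j + 1 + 2 = j + 2 + 1 := by omega
    rw [e3] at h1
    rw [e1, e2]
    have hD1 : ((j:ℂ) + 2) + 1 ≠ 0 := by
      intro h
      have h3 : ((j + 3 : ℕ) : ℂ) = 0 := by push_cast; linear_combination h
      exact (Nat.cast_ne_zero.mpr (by omega : j + 3 ≠ 0)) h3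
    have hD2 : ((j:ℂ) + 2) + β ≠ 0 := by
      intro h
      apply hβ (j + 2)
      push_cast
      linear_combination h
    push_cast
    rw [div_sub_div_same, ← add_div, eq_div_iff (mul_ne_zero hD1 hD2)]
    linear_combination (((j:ℂ) + 2) + β) * h1 - θ * (((j:ℂ) + 2) - p + β - 2) * h2
end
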